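/- arXiv:hep-th/9709169 — 5 statements merged into one kernel-verified Lean document; each statement's English description precedes it below -/
import Mathlib

section
/- Let B be the positive operator diagonal in the basis (e_n) with eigenvalues B_n ≥ 0 (B e_n = B_n e_n), let {A_i} be a sequence of positive bounded operators converging in the Hilbert–Schmidt norm to Ā, and suppose there is a constant B₀ with Σ_n B_n ⟪e_n, A_i e_n⟫ ≤ B₀ for every i. Then Σ_n B_n ⟪e_n, Ā e_n⟫ ≤ B₀. -/
/-!
Hilbert–Schmidt convergence dominates convergence of every matrix entry, so each term
`B n * re ⟪e n, A i (e n)⟫` of the trace converges to the corresponding term for `Ā`.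
A sum of nonnegative extended reals is lower semicontinuous under termwise convergence
(Fatou's lemma for counting measure), so the uniform bound `B₀` passes to the limit.
-/

open Filter
open scoped ENNReal InnerProductSpace ComplexOrder

variable {H : Type*} [NormedAddCommGroup H] [InnerProductSpace ℂ H] [CompleteSpace H]

/-- The (squared) Hilbert–Schmidt norm of an operator, computed via the matrix
elements in the fixed orthonormal Hilbert basis `e`, valued in `[0,∞]`. -/
noncomputable def hsNormSq (e : HilbertBasis ℕ ℂ H) (A : H →L[ℂ] H) : ℝ≥0∞ :=
  ∑' p : ℕ × ℕ, (‖⟪e p.1, A (e p.2)⟫_ℂ‖₊ : ℝ≥0∞) ^ 2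

/-- `A n → Ā` in the Hilbert–Schmidt norm. -/
def HSTendsto (e : HilbertBasis ℕ ℂ H) (A : ℕ → H →L[ℂ] H) (Abar : H →L[ℂ] H) : Prop :=
  Tendsto (fun n => hsNormSq e (A n - Abar)) atTop (nhds 0)

/-- `Tr(A B)` for a positive operator `A` and the positive operator `B` diagonal in the
basis `e` with eigenvalues `B n ≥ 0`: the sum `Σ_n B_n ⟪e n, A (e n)⟫`, valued in `[0,∞]`. -/
noncomputable def diagTrace (e : HilbertBasis ℕ ℂ H) (B : ℕ → ℝ) (A : H →L[ℂ] H) : ℝ≥0∞ :=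
  ∑' n : ℕ, ENNReal.ofReal (B n * RCLike.re ⟪e n, A (e n)⟫_ℂ)

theorem ENNReal.tsum_le_of_tendsto {α ι : Type*} {l : Filter α} [l.NeBot] {F : α → ι → ℝ≥0∞}
    {G : ι → ℝ≥0∞} {c : ℝ≥0∞} (hF : Tendsto F l (nhds G)) (hc : ∀ᶠ a in l, ∑' i, F a i ≤ c) :
    ∑' i, G i ≤ c :=
  ((lowerSemicontinuous_tsum fun i => (continuous_apply i).lowerSemicontinuous).isClosed_preimage
    c).mem_of_tendsto hF hc

section

variable {E : Type*} [NormedAddCommGroup E] [InnerProductSpace ℂ E]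

theorem nnnorm_inner_le_hsNormSq_rpow (e : HilbertBasis ℕ ℂ E) (A : E →L[ℂ] E) (m k : ℕ) :
    (‖⟪e m, A (e k)⟫_ℂ‖₊ : ℝ≥0∞) ≤ hsNormSq e A ^ (2⁻¹ : ℝ) :=
  (ENNReal.le_rpow_inv_iff two_pos).2 <| by
    rw [ENNReal.rpow_two]
    exact ENNReal.le_tsum (m, k)

theorem HSTendsto.tendsto_inner {e : HilbertBasis ℕ ℂ E} {A : ℕ → E →L[ℂ] E} {Abar : E →L[ℂ] E}
    (hlim : HSTendsto e A Abar) (m k : ℕ) :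
    Tendsto (fun i => ⟪e m, A i (e k)⟫_ℂ) atTop (nhds ⟪e m, Abar (e k)⟫_ℂ) := by
  have hnorm : Tendsto (fun i => hsNormSq e (A i - Abar) ^ (2⁻¹ : ℝ)) atTop (nhds 0) := by
    simpa [Function.comp_def] using
      ((ENNReal.continuous_rpow_const (y := 2⁻¹)).tendsto 0).comp hlim
  refine tendsto_iff_enorm_sub_tendsto_zero.2 <|
    tendsto_of_tendsto_of_tendsto_of_le_of_le tendsto_const_nhds hnorm (fun _ => zero_le)
      fun i => ?_
  simpa [inner_sub_right, enorm_eq_nnnorm] using nnnorm_inner_le_hsNormSq_rpow e (A i - Abar) m k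

end

theorem diagTrace_le_of_hs_tendsto_general
    (e : HilbertBasis ℕ ℂ H) (B : ℕ → ℝ)
    (A : ℕ → H →L[ℂ] H) (Abar : H →L[ℂ] H)
    (hlim : HSTendsto e A Abar)
    (B₀ : ℝ) (hbound : ∀ i, diagTrace e B (A i) ≤ ENNReal.ofReal B₀) :
    diagTrace e B Abar ≤ ENNReal.ofReal B₀ := by
  have hterm (n : ℕ) : Tendsto (fun i => ENNReal.ofReal (B n * RCLike.re ⟪e n, A i (e n)⟫_ℂ))
      atTop (nhds (ENNReal.ofReal (B n * RCLike.re ⟪e n, Abar (e n)⟫_ℂ))) :=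
    ENNReal.tendsto_ofReal <| tendsto_const_nhds.mul <|
      (RCLike.continuous_re.tendsto _).comp (hlim.tendsto_inner n n)
  exact ENNReal.tsum_le_of_tendsto (tendsto_pi_nhds.2 hterm) (Eventually.of_forall hbound)

/-- If positive operators `A i` converge in Hilbert–Schmidt norm to `Ā`,
`B` is a positive operator diagonal in the basis `e` with eigenvalues `B n ≥ 0`, and
`Tr(A i · B) ≤ B₀` for every `i`, then `Tr(Ā B) ≤ B₀`. -/
theorem diagTrace_le_of_hs_tendsto
    (e : HilbertBasis ℕ ℂ H) (B : ℕ → ℝ) (hB : ∀ n, 0 ≤ B n)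
    (A : ℕ → H →L[ℂ] H) (Abar : H →L[ℂ] H)
    (hpos : ∀ i, (A i).IsPositive) (hlim : HSTendsto e A Abar)
    (B₀ : ℝ) (hbound : ∀ i, diagTrace e B (A i) ≤ ENNReal.ofReal B₀) :
    diagTrace e B Abar ≤ ENNReal.ofReal B₀ :=
  diagTrace_le_of_hs_tendsto_general e B A Abar hlim B₀ hbound
end

section
/- Fix E > 0. For every ε > 0 there exists δ > 0 such that for any two positive trace-class operators A and A' with Tr(A H₀) ≤ E and Tr(A' H₀) ≤ E, if ‖A − A'‖₂ < δ then |Tr A − Tr A'| < ε. -/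
open Filter
open scoped ENNReal InnerProductSpace ComplexOrder

variable {H : Type*} [NormedAddCommGroup H] [InnerProductSpace ℂ H] [CompleteSpace H]

/-- The Hilbert–Schmidt norm `‖A‖₂`, valued in `[0,∞]`. -/
noncomputable def hsNorm (e : HilbertBasis ℕ ℂ H) (A : H →L[ℂ] H) : ℝ≥0∞ :=
  hsNormSq e A ^ (1 / 2 : ℝ)

/-- A positive operator `A` is trace-class iff its diagonal in the orthonormal basis `e`
is summable; its trace is then `Tr A = Σ_n ⟪e n, A (e n)⟫`. -/
def PosTraceClass (e : HilbertBasis ℕ ℂ H) (A : H →L[ℂ] H) : Prop :=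
  Summable fun n : ℕ => RCLike.re ⟪e n, A (e n)⟫_ℂ

/-- The trace of a (positive trace-class) operator: `Σ_n ⟪e n, A (e n)⟫`. -/
noncomputable def traceOf (e : HilbertBasis ℕ ℂ H) (A : H →L[ℂ] H) : ℝ :=
  ∑' n : ℕ, RCLike.re ⟪e n, A (e n)⟫_ℂ

/-- `Tr(A H₀)` for the positive diagonal operator `H₀` with `H₀ e_n = E_n e_n`:
the sum `Σ_n E_n ⟪e n, A (e n)⟫`, valued in `[0,∞]`. -/
noncomputable def energyTrace (e : HilbertBasis ℕ ℂ H) (En : ℕ → ℝ) (A : H →L[ℂ] H) : ℝ≥0∞ :=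
  ∑' n : ℕ, ENNReal.ofReal (En n * RCLike.re ⟪e n, A (e n)⟫_ℂ)

private lemma diag_nonneg (e : HilbertBasis ℕ ℂ H) {A : H →L[ℂ] H}
    (hA : A.IsPositive) (n : ℕ) : 0 ≤ RCLike.re ⟪e n, A (e n)⟫_ℂ := by
  have := hA.2 (e n)
  rw [ContinuousLinearMap.reApplyInnerSelf] at this
  rwa [← inner_conj_symm, RCLike.conj_re] at this

private lemma diag_lt (e : HilbertBasis ℕ ℂ H) (B : H →L[ℂ] H) {δ : ℝ} (hδ0 : 0 ≤ δ)
    (h : hsNorm e B < ENNReal.ofReal δ) (n : ℕ) : ‖⟪e n, B (e n)⟫_ℂ‖ < δ := by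
  set a : NNReal := ‖⟪e n, B (e n)⟫_ℂ‖₊ with ha
  have h1 : ((a : ℝ≥0∞)) ^ (2 : ℕ) ≤ hsNormSq e B := by
    have := ENNReal.le_tsum (f := fun p : ℕ × ℕ => (‖⟪e p.1, B (e p.2)⟫_ℂ‖₊ : ℝ≥0∞) ^ 2)
      ((n, n) : ℕ × ℕ)
    exact this
  have h2 : (a : ℝ≥0∞) ≤ hsNorm e B := by
    have := ENNReal.rpow_le_rpow h1 (by norm_num : (0:ℝ) ≤ 1/2)
    rwa [← ENNReal.rpow_natCast (a : ℝ≥0∞) 2, ← ENNReal.rpow_mul,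
      (by norm_num : ((2:ℕ):ℝ) * (1/2 : ℝ) = 1), ENNReal.rpow_one] at this
  have h3 : (a : ℝ≥0∞) < ENNReal.ofReal δ := lt_of_le_of_lt h2 h
  rw [ENNReal.ofReal, ENNReal.coe_lt_coe] at h3
  have := (NNReal.coe_lt_coe.mpr h3)
  rwa [Real.coe_toNNReal _ hδ0] at this

private lemma tail_bound (e : HilbertBasis ℕ ℂ H) (En : ℕ → ℝ)
    {A : H →L[ℂ] H} (hA : A.IsPositive) (hsum : PosTraceClass e A)
    {E c : ℝ} (hE : 0 ≤ E) (hc : 0 < c)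
    (hEA : energyTrace e En A ≤ ENNReal.ofReal E)
    (N : ℕ) (hN : ∀ n, N ≤ n → c ≤ En n) :
    ∑' k, RCLike.re ⟪e (k + N), A (e (k + N))⟫_ℂ ≤ E / c := by
  set f : ℕ → ℝ := fun n => RCLike.re ⟪e n, A (e n)⟫_ℂ with hf
  have hfnn : ∀ n, 0 ≤ f n := fun n => diag_nonneg e hA n
  have hsum' : Summable fun k => f (k + N) := (summable_nat_add_iff N).mpr hsum
  have h1 : ENNReal.ofReal (∑' k, f (k + N)) = ∑' k, ENNReal.ofReal (f (k + N)) :=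
    ENNReal.ofReal_tsum_of_nonneg (fun k => hfnn _) hsum'
  have h2 : ENNReal.ofReal c * ∑' k, ENNReal.ofReal (f (k + N)) ≤ ENNReal.ofReal E := by
    rw [← ENNReal.tsum_mul_left]
    calc ∑' k, ENNReal.ofReal c * ENNReal.ofReal (f (k + N))
        = ∑' k, ENNReal.ofReal (c * f (k + N)) := by
          simp [ENNReal.ofReal_mul hc.le]
      _ ≤ ∑' k, ENNReal.ofReal (En (k + N) * f (k + N)) :=
          ENNReal.tsum_le_tsum fun k => ENNReal.ofReal_le_ofReal
            (mul_le_mul_of_nonneg_right (hN _ (Nat.le_add_left N k)) (hfnn _))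
      _ ≤ energyTrace e En A := by
          exact ENNReal.tsum_comp_le_tsum_of_injective (add_left_injective N)
            (fun n => ENNReal.ofReal (En n * f n))
      _ ≤ ENNReal.ofReal E := hEA
  have hc' : ENNReal.ofReal c ≠ 0 := by simp [hc]
  have h3 : ∑' k, ENNReal.ofReal (f (k + N)) ≤ ENNReal.ofReal E / ENNReal.ofReal c :=
    ENNReal.le_div_iff_mul_le (Or.inl hc') (Or.inl ENNReal.ofReal_ne_top) |>.mpr
      (by rwa [mul_comm])
  rw [← ENNReal.ofReal_div_of_pos hc] at h3
  rw [← h1] at h3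
  exact (ENNReal.ofReal_le_ofReal_iff (by positivity)).mp h3

/-- uniform norm-to-trace estimate.  Let `H₀` be diagonal in the basis `e`
with nondecreasing nonnegative eigenvalues `E_n → ∞` and fix `E > 0`.  For every `ε > 0`
there is a `δ > 0` such that for any positive trace-class `A`, `A'` with
`Tr(A H₀) ≤ E` and `Tr(A' H₀) ≤ E`, `‖A − A'‖₂ < δ` implies `|Tr A − Tr A'| < ε`. -/
theorem norm_to_trace
    (e : HilbertBasis ℕ ℂ H) (En : ℕ → ℝ)
    (hEn0 : ∀ n, 0 ≤ En n) (hEnmono : Monotone En) (hEntop : Tendsto En atTop atTop)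
    (E : ℝ) (hE : 0 < E) (ε : ℝ) (hε : 0 < ε) :
    ∃ δ : ℝ, 0 < δ ∧ ∀ A A' : H →L[ℂ] H,
      A.IsPositive → A'.IsPositive → PosTraceClass e A → PosTraceClass e A' →
      energyTrace e En A ≤ ENNReal.ofReal E → energyTrace e En A' ≤ ENNReal.ofReal E →
      hsNorm e (A - A') < ENNReal.ofReal δ →
      |traceOf e A - traceOf e A'| < ε := by
  obtain ⟨N, hN⟩ := eventually_atTop.mp (hEntop.eventually_ge_atTop (4 * E / ε))
  have hc : (0:ℝ) < 4 * E / ε := by positivity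
  refine ⟨ε / (2 * (N + 1)), by positivity, ?_⟩
  intro A A' hA hA' hTA hTA' hEA hEA' hδ
  set δ : ℝ := ε / (2 * (N + 1)) with hδdef
  have hδ0 : 0 < δ := by positivity
  set f : ℕ → ℝ := fun n => RCLike.re ⟪e n, A (e n)⟫_ℂ with hfdef
  set g : ℕ → ℝ := fun n => RCLike.re ⟪e n, A' (e n)⟫_ℂ with hgdef
  have htailA : ∑' k, f (k + N) ≤ ε / 4 := by
    have := tail_bound e En hA hTA hE.le hc hEA N hN
    calc ∑' k, f (k + N) ≤ E / (4 * E / ε) := this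
      _ = ε / 4 := by field_simp
  have htailA' : ∑' k, g (k + N) ≤ ε / 4 := by
    have := tail_bound e En hA' hTA' hE.le hc hEA' N hN
    calc ∑' k, g (k + N) ≤ E / (4 * E / ε) := this
      _ = ε / 4 := by field_simp
  have hdecA : ∑ i ∈ Finset.range N, f i + ∑' k, f (k + N) = traceOf e A :=
    Summable.sum_add_tsum_nat_add N hTA
  have hdecA' : ∑ i ∈ Finset.range N, g i + ∑' k, g (k + N) = traceOf e A' :=
    Summable.sum_add_tsum_nat_add N hTA'
  have hdiag : ∀ n, |f n - g n| < δ := by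
    intro n
    have h1 : f n - g n = RCLike.re ⟪e n, (A - A') (e n)⟫_ℂ := by
      simp [hfdef, hgdef, inner_sub_right]
    have h2 := diag_lt e (A - A') hδ0.le hδ n
    calc |f n - g n| = |RCLike.re ⟪e n, (A - A') (e n)⟫_ℂ| := by rw [h1]
      _ ≤ ‖⟪e n, (A - A') (e n)⟫_ℂ‖ := RCLike.abs_re_le_norm _
      _ < δ := h2
  have hhead : |∑ i ∈ Finset.range N, f i - ∑ i ∈ Finset.range N, g i| < ε / 2 := by
    calc |∑ i ∈ Finset.range N, f i - ∑ i ∈ Finset.range N, g i|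
        = |∑ i ∈ Finset.range N, (f i - g i)| := by rw [Finset.sum_sub_distrib]
      _ ≤ ∑ i ∈ Finset.range N, |f i - g i| := Finset.abs_sum_le_sum_abs _ _
      _ ≤ ∑ _i ∈ Finset.range N, δ := Finset.sum_le_sum fun i _ => (hdiag i).le
      _ = N * δ := by simp [mul_comm]
      _ < (N + 1) * δ := by nlinarith
      _ = ε / 2 := by rw [hδdef]; field_simp
  have htfnn : 0 ≤ ∑' k, f (k + N) :=
    tsum_nonneg fun k => diag_nonneg e hA _
  have htgnn : 0 ≤ ∑' k, g (k + N) :=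
    tsum_nonneg fun k => diag_nonneg e hA' _
  have : traceOf e A - traceOf e A' =
      (∑ i ∈ Finset.range N, f i - ∑ i ∈ Finset.range N, g i) +
      (∑' k, f (k + N) - ∑' k, g (k + N)) := by
    rw [← hdecA, ← hdecA']; ring
  rw [this]
  calc |(∑ i ∈ Finset.range N, f i - ∑ i ∈ Finset.range N, g i) +
      (∑' k, f (k + N) - ∑' k, g (k + N))|
      ≤ |∑ i ∈ Finset.range N, f i - ∑ i ∈ Finset.range N, g i| +
        |∑' k, f (k + N) - ∑' k, g (k + N)| := abs_add_le _ _
    _ < ε / 2 + ε / 2 := by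
        refine add_lt_add_of_lt_of_le hhead ?_
        rw [abs_sub_le_iff]
        constructor <;> nlinarith
    _ = ε := by ring
end

section
/- The von Neumann entropy is strictly concave on density matrices: if ρ and ρ̄ are n×n density matrices with ρ ≠ ρ̄ and t ∈ (0,1), then S(t ρ + (1−t) ρ̄) > t S(ρ) + (1−t) S(ρ̄). -/
/-!
Write `η = negMulLog` and, for an orthonormal basis `b`, let `D_b(A) = Σ_k η(⟪b_k, A b_k⟫)` be the
entropy of the diagonal of `A` in `b`. Expanding `b_k` in an eigenbasis `(w_j)` of `A` makes each
diagonal entry a convex combination of the eigenvalues with doubly stochastic weights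
`‖⟪w_j, b_k⟫‖²`, so Jensen gives `S(A) ≤ D_b(A)`, with equality only if every `b_k` is an
eigenvector of `A`. For `b` an eigenbasis of `σ = tρ + (1-t)ρ̄`,
`S(σ) = D_b(σ) ≥ t D_b(ρ) + (1-t) D_b(ρ̄) ≥ t S(ρ) + (1-t) S(ρ̄)`,
the middle step by concavity of `η` on each diagonal entry. If both steps are equalities, `ρ` and
`ρ̄` have the same diagonal in `b` and `b` diagonalizes both, so `ρ = ρ̄`.
-/

open scoped ComplexOrder

/-- The function `s(p) = −p·log p` for `p > 0`, `s(p) = 0` otherwise. -/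
noncomputable def sfun (p : ℝ) : ℝ := if 0 < p then -p * Real.log p else 0

/-- An `n×n` complex matrix is a density matrix if it is Hermitian positive
semidefinite with trace one. -/
def IsDensityMatrix {n : ℕ} (ρ : Matrix (Fin n) (Fin n) ℂ) : Prop :=
  ρ.PosSemidef ∧ ρ.trace = 1

/-- The von Neumann entropy `S(ρ) = Σ_k s(λ_k)` of a Hermitian matrix, where the
`λ_k` are its eigenvalues listed with multiplicity (junk value `0` otherwise). -/
noncomputable def vnEntropy {n : ℕ} (ρ : Matrix (Fin n) (Fin n) ℂ) : ℝ :=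
  if h : ρ.IsHermitian then ∑ k, sfun (h.eigenvalues k) else 0

open scoped InnerProductSpace

section Spectral

variable {𝕜 E ι κ : Type*} [RCLike 𝕜] [NormedAddCommGroup E] [InnerProductSpace 𝕜 E]
  [Fintype ι] [Fintype κ]

lemma OrthonormalBasis.sum_eq_sum_sum_sq_norm_inner_mul (w : OrthonormalBasis ι 𝕜 E)
    (b : OrthonormalBasis κ 𝕜 E) (g : ι → ℝ) :
    ∑ j, g j = ∑ k, ∑ j, ‖⟪w j, b k⟫_𝕜‖ ^ 2 * g j := by
  rw [Finset.sum_comm]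
  refine Finset.sum_congr rfl fun j _ => ?_
  rw [← Finset.sum_mul, b.sum_sq_norm_inner_left, w.norm_eq_one, one_pow, one_mul]

variable {T : E →ₗ[𝕜] E} {w : OrthonormalBasis ι 𝕜 E} {μ : ι → ℝ}

lemma apply_eq_sum_inner_smul (hT : ∀ j, T (w j) = (μ j : 𝕜) • w j) (v : E) :
    T v = ∑ j, (⟪w j, v⟫_𝕜 * μ j) • w j := by
  conv_lhs => rw [← w.sum_repr' v]
  simp only [map_sum, map_smul, hT, smul_smul]

lemma re_inner_apply_eq_sum (hT : ∀ j, T (w j) = (μ j : 𝕜) • w j) (v : E) :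
    RCLike.re ⟪v, T v⟫_𝕜 = ∑ j, ‖⟪w j, v⟫_𝕜‖ ^ 2 * μ j := by
  rw [apply_eq_sum_inner_smul hT, inner_sum, map_sum]
  refine Finset.sum_congr rfl fun j _ => ?_
  rw [inner_smul_right, ← inner_conj_symm v, mul_comm, ← mul_assoc, RCLike.conj_mul]
  norm_cast

lemma apply_eq_smul_of_forall_inner_ne_zero (hT : ∀ j, T (w j) = (μ j : 𝕜) • w j) {v : E}
    {c : ℝ} (h : ∀ j, ⟪w j, v⟫_𝕜 ≠ 0 → μ j = c) : T v = (c : 𝕜) • v := by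
  conv_rhs => rw [← w.sum_repr' v]
  rw [apply_eq_sum_inner_smul hT, Finset.smul_sum]
  refine Finset.sum_congr rfl fun j _ => ?_
  by_cases hj : ⟪w j, v⟫_𝕜 = 0
  · simp [hj]
  · rw [h j hj, smul_smul, mul_comm]

lemma re_inner_apply_self (hT : ∀ j, T (w j) = (μ j : 𝕜) • w j) (j : ι) :
    RCLike.re ⟪w j, T (w j)⟫_𝕜 = μ j := by
  simp [hT, inner_smul_right, w.norm_eq_one]

variable {s : Set ℝ} {f : ℝ → ℝ}

lemma ConcaveOn.sum_le_map_re_inner_apply (hf : ConcaveOn ℝ s f)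
    (hT : ∀ j, T (w j) = (μ j : 𝕜) • w j) (hμ : ∀ j, μ j ∈ s) {v : E} (hv : ‖v‖ = 1) :
    ∑ j, ‖⟪w j, v⟫_𝕜‖ ^ 2 * f (μ j) ≤ f (RCLike.re ⟪v, T v⟫_𝕜) := by
  rw [re_inner_apply_eq_sum hT]
  exact hf.le_map_sum (fun j _ => by positivity) (by rw [w.sum_sq_norm_inner_right, hv, one_pow])
    fun j _ => hμ j

lemma StrictConcaveOn.apply_eq_smul_of_map_re_inner_apply_le (hf : StrictConcaveOn ℝ s f)
    (hT : ∀ j, T (w j) = (μ j : 𝕜) • w j) (hμ : ∀ j, μ j ∈ s) {v : E} (hv : ‖v‖ = 1)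
    (h : f (RCLike.re ⟪v, T v⟫_𝕜) ≤ ∑ j, ‖⟪w j, v⟫_𝕜‖ ^ 2 * f (μ j)) :
    T v = (RCLike.re ⟪v, T v⟫_𝕜 : 𝕜) • v := by
  have heq := le_antisymm h (hf.concaveOn.sum_le_map_re_inner_apply hT hμ hv)
  rw [re_inner_apply_eq_sum hT] at heq ⊢
  refine apply_eq_smul_of_forall_inner_ne_zero hT fun j hj => ?_
  exact (hf.map_sum_eq_iff' (fun j _ => by positivity)
    (by rw [w.sum_sq_norm_inner_right, hv, one_pow]) fun j _ => hμ j).1 heq j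
    (Finset.mem_univ j) (by positivity)

lemma ConcaveOn.sum_le_sum_map_re_inner_apply (hf : ConcaveOn ℝ s f)
    (hT : ∀ j, T (w j) = (μ j : 𝕜) • w j) (hμ : ∀ j, μ j ∈ s) (b : OrthonormalBasis κ 𝕜 E) :
    ∑ j, f (μ j) ≤ ∑ k, f (RCLike.re ⟪b k, T (b k)⟫_𝕜) := by
  rw [w.sum_eq_sum_sum_sq_norm_inner_mul b]
  exact Finset.sum_le_sum fun k _ => hf.sum_le_map_re_inner_apply hT hμ (b.norm_eq_one k)

lemma StrictConcaveOn.apply_eq_smul_of_sum_map_re_inner_apply_le (hf : StrictConcaveOn ℝ s f)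
    (hT : ∀ j, T (w j) = (μ j : 𝕜) • w j) (hμ : ∀ j, μ j ∈ s) (b : OrthonormalBasis κ 𝕜 E)
    (h : ∑ k, f (RCLike.re ⟪b k, T (b k)⟫_𝕜) ≤ ∑ j, f (μ j)) (k : κ) :
    T (b k) = (RCLike.re ⟪b k, T (b k)⟫_𝕜 : 𝕜) • b k := by
  have hle : ∀ k, ∑ j, ‖⟪w j, b k⟫_𝕜‖ ^ 2 * f (μ j) ≤ f (RCLike.re ⟪b k, T (b k)⟫_𝕜) :=
    fun k => hf.concaveOn.sum_le_map_re_inner_apply hT hμ (b.norm_eq_one k)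
  rw [w.sum_eq_sum_sum_sq_norm_inner_mul b] at h
  have heq := (Finset.sum_eq_sum_iff_of_le fun k _ => hle k).1
    (le_antisymm (Finset.sum_le_sum fun k _ => hle k) h) k (Finset.mem_univ k)
  exact hf.apply_eq_smul_of_map_re_inner_apply_le hT hμ (b.norm_eq_one k) heq.ge

end Spectral

lemma Matrix.IsHermitian.toEuclideanLin_eigenvectorBasis {𝕜 n : Type*} [RCLike 𝕜] [Fintype n]
    [DecidableEq n] {A : Matrix n n 𝕜} (hA : A.IsHermitian) (j : n) :
    Matrix.toEuclideanLin A (hA.eigenvectorBasis j) =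
      (hA.eigenvalues j : 𝕜) • hA.eigenvectorBasis j := by
  rw [Matrix.toLpLin_apply, hA.mulVec_eigenvectorBasis, ← RCLike.real_smul_eq_coe_smul]
  rfl

section DiagonalEntropy

variable {𝕜 m κ : Type*} [RCLike 𝕜] [Fintype m] [DecidableEq m] [Fintype κ]

noncomputable def basisDiag (b : OrthonormalBasis κ 𝕜 (EuclideanSpace 𝕜 m)) (A : Matrix m m 𝕜)
    (k : κ) : ℝ :=
  RCLike.re ⟪b k, Matrix.toEuclideanLin A (b k)⟫_𝕜

noncomputable def diagEntropy (b : OrthonormalBasis κ 𝕜 (EuclideanSpace 𝕜 m))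
    (A : Matrix m m 𝕜) : ℝ :=
  ∑ k, Real.negMulLog (basisDiag b A k)

variable (b : OrthonormalBasis κ 𝕜 (EuclideanSpace 𝕜 m)) {A B : Matrix m m 𝕜}

lemma basisDiag_smul_add_smul (s t : ℝ) (k : κ) :
    basisDiag b ((s : 𝕜) • A + (t : 𝕜) • B) k = s * basisDiag b A k + t * basisDiag b B k := by
  simp only [basisDiag, map_add, map_smul, LinearMap.add_apply, LinearMap.smul_apply,
    inner_add_right, inner_smul_right, map_add, RCLike.re_ofReal_mul]

lemma basisDiag_nonneg (hA : A.PosSemidef) (k : κ) : 0 ≤ basisDiag b A k :=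
  (Matrix.isPositive_toEuclideanLin_iff.2 hA).re_inner_nonneg_right (b k)

lemma mul_diagEntropy_add_mul_diagEntropy_le (hA : A.PosSemidef) (hB : B.PosSemidef) {t : ℝ}
    (ht₀ : 0 ≤ t) (ht₁ : t ≤ 1) :
    t * diagEntropy b A + (1 - t) * diagEntropy b B ≤
      diagEntropy b ((t : 𝕜) • A + ((1 - t : ℝ) : 𝕜) • B) := by
  simp only [diagEntropy, basisDiag_smul_add_smul, Finset.mul_sum, ← Finset.sum_add_distrib]
  exact Finset.sum_le_sum fun k _ => Real.concaveOn_negMulLog.2 (basisDiag_nonneg b hA k)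
    (basisDiag_nonneg b hB k) ht₀ (by linarith) (by ring)

lemma mul_diagEntropy_add_mul_diagEntropy_lt (hA : A.PosSemidef) (hB : B.PosSemidef) {t : ℝ}
    (ht₀ : 0 < t) (ht₁ : t < 1) (hAB : ∃ k, basisDiag b A k ≠ basisDiag b B k) :
    t * diagEntropy b A + (1 - t) * diagEntropy b B <
      diagEntropy b ((t : 𝕜) • A + ((1 - t : ℝ) : 𝕜) • B) := by
  obtain ⟨k, hk⟩ := hAB
  simp only [diagEntropy, basisDiag_smul_add_smul, Finset.mul_sum, ← Finset.sum_add_distrib]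
  exact Finset.sum_lt_sum (fun k _ => Real.concaveOn_negMulLog.2 (basisDiag_nonneg b hA k)
    (basisDiag_nonneg b hB k) ht₀.le (by linarith) (by ring))
    ⟨k, Finset.mem_univ k, Real.strictConcaveOn_negMulLog.2 (basisDiag_nonneg b hA k)
      (basisDiag_nonneg b hB k) hk ht₀ (by linarith) (by ring)⟩

end DiagonalEntropy

lemma sfun_eq_negMulLog {p : ℝ} (hp : 0 ≤ p) : sfun p = Real.negMulLog p := by
  rcases hp.eq_or_lt with rfl | hp
  · simp [sfun]
  · simp [sfun, hp, Real.negMulLog]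

section VonNeumann

variable {n : ℕ} {κ : Type*} [Fintype κ] {ρ : Matrix (Fin n) (Fin n) ℂ}

lemma vnEntropy_eq_sum_negMulLog (hρ : ρ.PosSemidef) :
    vnEntropy ρ = ∑ k, Real.negMulLog (hρ.1.eigenvalues k) := by
  rw [vnEntropy, dif_pos hρ.1]
  exact Finset.sum_congr rfl fun k _ => sfun_eq_negMulLog (hρ.eigenvalues_nonneg k)

lemma vnEntropy_le_diagEntropy (hρ : ρ.PosSemidef)
    (b : OrthonormalBasis κ ℂ (EuclideanSpace ℂ (Fin n))) : vnEntropy ρ ≤ diagEntropy b ρ := by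
  rw [vnEntropy_eq_sum_negMulLog hρ]
  exact Real.concaveOn_negMulLog.sum_le_sum_map_re_inner_apply
    hρ.1.toEuclideanLin_eigenvectorBasis hρ.eigenvalues_nonneg b

lemma toEuclideanLin_apply_eq_smul_of_diagEntropy_le (hρ : ρ.PosSemidef)
    (b : OrthonormalBasis κ ℂ (EuclideanSpace ℂ (Fin n))) (h : diagEntropy b ρ ≤ vnEntropy ρ)
    (k : κ) : Matrix.toEuclideanLin ρ (b k) = (basisDiag b ρ k : ℂ) • b k := by
  rw [vnEntropy_eq_sum_negMulLog hρ] at h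
  exact Real.strictConcaveOn_negMulLog.apply_eq_smul_of_sum_map_re_inner_apply_le
    hρ.1.toEuclideanLin_eigenvectorBasis hρ.eigenvalues_nonneg b h k

lemma diagEntropy_eigenvectorBasis (hρ : ρ.PosSemidef) :
    diagEntropy hρ.1.eigenvectorBasis ρ = vnEntropy ρ := by
  simp only [diagEntropy, basisDiag, re_inner_apply_self hρ.1.toEuclideanLin_eigenvectorBasis,
    vnEntropy_eq_sum_negMulLog hρ]

end VonNeumann

/-- the von Neumann entropy is strictly concave on density matrices:
if `ρ ≠ ρ̄` are density matrices and `t ∈ (0,1)`, then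
`S(tρ + (1−t)ρ̄) > t·S(ρ) + (1−t)·S(ρ̄)`. -/
theorem vnEntropy_strictConcave
    {n : ℕ} (ρ ρbar : Matrix (Fin n) (Fin n) ℂ)
    (hρ : IsDensityMatrix ρ) (hρbar : IsDensityMatrix ρbar) (hne : ρ ≠ ρbar)
    (t : ℝ) (ht : t ∈ Set.Ioo (0 : ℝ) 1) :
    t * vnEntropy ρ + (1 - t) * vnEntropy ρbar
      < vnEntropy (((t : ℝ) : ℂ) • ρ + (((1 - t : ℝ)) : ℂ) • ρbar) := by
  obtain ⟨ht₀, ht₁⟩ := ht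
  have hσ : (((t : ℝ) : ℂ) • ρ + (((1 - t : ℝ)) : ℂ) • ρbar).PosSemidef :=
    (hρ.1.smul (by exact_mod_cast ht₀.le)).add
      (hρbar.1.smul (by exact_mod_cast (sub_pos.2 ht₁).le))
  rw [← diagEntropy_eigenvectorBasis hσ]
  set b := hσ.1.eigenvectorBasis
  have hρb := vnEntropy_le_diagEntropy hρ.1 b
  have hρbarb := vnEntropy_le_diagEntropy hρbar.1 b
  by_cases hdiag : ∃ k, basisDiag b ρ k ≠ basisDiag b ρbar k
  · refine lt_of_le_of_lt ?_ (mul_diagEntropy_add_mul_diagEntropy_lt b hρ.1 hρbar.1 ht₀ ht₁ hdiag)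
    gcongr
  refine lt_of_lt_of_le ?_ (mul_diagEntropy_add_mul_diagEntropy_le b hρ.1 hρbar.1 ht₀.le ht₁.le)
  suffices h : vnEntropy ρ < diagEntropy b ρ ∨ vnEntropy ρbar < diagEntropy b ρbar by
    have h1t : 0 < 1 - t := sub_pos.2 ht₁
    rcases h with h | h
    · exact add_lt_add_of_lt_of_le (by gcongr) (by gcongr)
    · exact add_lt_add_of_le_of_lt (by gcongr) (by gcongr)
  by_contra! h
  refine hne (Matrix.toEuclideanLin.injective (b.toBasis.ext fun k => ?_))
  rw [OrthonormalBasis.coe_toBasis, toEuclideanLin_apply_eq_smul_of_diagEntropy_le hρ.1 b h.1 k,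
    toEuclideanLin_apply_eq_smul_of_diagEntropy_le hρbar.1 b h.2 k, not_exists_not.1 hdiag k]
end

section
/- Let D be any convex set of n×n density matrices. If ρ₁ ∈ D and ρ₂ ∈ D both maximize the von Neumann entropy S over D (i.e. S(ρ₁) ≥ S(ρ) and S(ρ₂) ≥ S(ρ) for every ρ ∈ D), then ρ₁ = ρ₂: the entropy-maximizing state subject to the constraints, if it exists, is unique. -/
open scoped ComplexOrder

/-!
The von Neumann entropy is strictly concave on positive semidefinite matrices, and a strictly
concave function has at most one maximizer on a convex set.

For strict concavity, conjugate `ρ₁`, `ρ₂` by a unitary `W` diagonalizing `σ = a ρ₁ + b ρ₂`.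
The diagonal of `W⋆ ρ W` is the spectrum of `ρ` averaged by the doubly stochastic matrix
`|(W⋆ V)ᵢⱼ|²` (`V` an eigenbasis of `ρ`), so by Jensen `S(ρ) ≤ ∑ s((W⋆ ρ W)ᵢᵢ)`, with equality only
if `W⋆ ρ W` is diagonal. Concavity of `s` on the diagonal entries then gives
`a S(ρ₁) + b S(ρ₂) ≤ S(σ)`, and equality forces `W⋆ ρ₁ W` and `W⋆ ρ₂ W` to be the same diagonal
matrix.
-/

open Matrix Finset

lemma sfun_eqOn_negMulLog : Set.EqOn sfun Real.negMulLog (Set.Ici 0) := by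
  intro p (hp : 0 ≤ p)
  rcases hp.eq_or_lt with rfl | hp
  · simp [sfun]
  · simp [sfun, hp, Real.negMulLog]

lemma strictConcaveOn_sfun : StrictConcaveOn ℝ (Set.Ici 0) sfun :=
  Real.strictConcaveOn_negMulLog.congr sfun_eqOn_negMulLog.symm

section DoublyStochastic

variable {ι : Type*} [Fintype ι] [DecidableEq ι] {M : Matrix ι ι ℝ} {f : ℝ → ℝ} {s : Set ℝ}
  {x : ι → ℝ}

lemma sum_map_eq_sum_sum_mul_of_mem_doublyStochastic (hM : M ∈ doublyStochastic ℝ ι) :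
    ∑ j, f (x j) = ∑ i, ∑ j, M i j * f (x j) := by
  rw [sum_comm]
  simp_rw [← sum_mul, sum_col_of_mem_doublyStochastic hM, one_mul]

theorem ConcaveOn.sum_le_sum_map_mulVec (hf : ConcaveOn ℝ s f) (hM : M ∈ doublyStochastic ℝ ι)
    (hx : ∀ j, x j ∈ s) : ∑ j, f (x j) ≤ ∑ i, f ((M *ᵥ x) i) := by
  rw [sum_map_eq_sum_sum_mul_of_mem_doublyStochastic hM]
  exact sum_le_sum fun i _ => hf.le_map_sum (fun j _ => hM.1 i j)
    (sum_row_of_mem_doublyStochastic hM i) fun j _ => hx j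

theorem StrictConcaveOn.eq_mulVec_of_sum_map_mulVec_eq (hf : StrictConcaveOn ℝ s f)
    (hM : M ∈ doublyStochastic ℝ ι) (hx : ∀ j, x j ∈ s)
    (heq : ∑ i, f ((M *ᵥ x) i) = ∑ j, f (x j)) {i j : ι} (hij : M i j ≠ 0) :
    x j = (M *ᵥ x) i := by
  have hjensen : ∀ i ∈ univ, ∑ j, M i j • f (x j) ≤ f (∑ j, M i j • x j) := fun i _ =>
    hf.concaveOn.le_map_sum (fun j _ => hM.1 i j) (sum_row_of_mem_doublyStochastic hM i)
      fun j _ => hx j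
  rw [sum_map_eq_sum_sum_mul_of_mem_doublyStochastic (f := f) (x := x) hM] at heq
  have hrow := (sum_eq_sum_iff_of_le hjensen).1 heq.symm i (mem_univ i)
  exact (hf.map_sum_eq_iff' (fun j _ => hM.1 i j) (sum_row_of_mem_doublyStochastic hM i)
    fun j _ => hx j).1 hrow.symm j (mem_univ j) hij

end DoublyStochastic

section Conjugation

variable {𝕜 ι : Type*} [RCLike 𝕜] [Fintype ι] [DecidableEq ι] {U : Matrix ι ι 𝕜}

theorem norm_sq_mem_doublyStochastic (hU : U ∈ unitaryGroup ι 𝕜) :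
    of (fun i j => ‖U i j‖ ^ 2) ∈ doublyStochastic ℝ ι := by
  refine mem_doublyStochastic_iff_sum.2 ⟨fun i j => sq_nonneg _, fun i => ?_, fun j => ?_⟩
  · have h := congr_fun₂ (mem_unitaryGroup_iff.1 hU) i i
    simp only [mul_apply, star_apply, RCLike.star_def, RCLike.mul_conj, one_apply_eq] at h
    exact_mod_cast h
  · have h := congr_fun₂ (mem_unitaryGroup_iff'.1 hU) j j
    simp only [mul_apply, star_apply, RCLike.star_def, RCLike.conj_mul, one_apply_eq] at h
    exact_mod_cast h

theorem mul_diagonal_mul_star_apply_self (U : Matrix ι ι 𝕜) (d : ι → ℝ) (i : ι) :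
    (U * diagonal (RCLike.ofReal ∘ d) * star U : Matrix ι ι 𝕜) i i =
      ((of fun i j => ‖U i j‖ ^ 2) *ᵥ d) i := by
  rw [mul_apply]
  simp only [mul_diagonal, star_apply, RCLike.star_def, mulVec, dotProduct, of_apply,
    Function.comp_apply]
  push_cast
  refine sum_congr rfl fun j _ => ?_
  rw [mul_right_comm, RCLike.mul_conj, mul_comm]

theorem mul_diagonal_mul_star_eq_diagonal (hU : U ∈ unitaryGroup ι 𝕜) {d c : ι → 𝕜}
    (h : ∀ i j, U i j ≠ 0 → d j = c i) : U * diagonal d * star U = diagonal c := by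
  have hcomm : U * diagonal d = diagonal c * U := by
    ext i j
    rw [mul_diagonal, diagonal_mul]
    by_cases hij : U i j = 0
    · simp [hij]
    · rw [h i j hij, mul_comm]
  rw [hcomm, Matrix.mul_assoc, mem_unitaryGroup_iff.1 hU, Matrix.mul_one]

theorem Matrix.IsHermitian.star_mul_mul_eq {A : Matrix ι ι 𝕜} (hA : A.IsHermitian)
    (W : Matrix ι ι 𝕜) :
    star W * A * W = (star W * (hA.eigenvectorUnitary : Matrix ι ι 𝕜)) *
      diagonal (RCLike.ofReal ∘ hA.eigenvalues) *
      star (star W * (hA.eigenvectorUnitary : Matrix ι ι 𝕜)) := by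
  conv_lhs => rw [hA.spectral_theorem]
  simp only [Unitary.conjStarAlgAut_apply, star_mul, star_star, Matrix.mul_assoc]

theorem Matrix.IsHermitian.re_star_mul_mul_apply_self {A : Matrix ι ι 𝕜} (hA : A.IsHermitian)
    (W : Matrix ι ι 𝕜) (i : ι) :
    RCLike.re ((star W * A * W) i i) =
      ((of fun i j => ‖(star W * (hA.eigenvectorUnitary : Matrix ι ι 𝕜)) i j‖ ^ 2) *ᵥ
        hA.eigenvalues) i := by
  rw [hA.star_mul_mul_eq W]
  exact (congrArg RCLike.re (mul_diagonal_mul_star_apply_self _ _ i)).trans (RCLike.ofReal_re _)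

end Conjugation

theorem convex_setOf_posSemidef {𝕜 ι : Type*} [RCLike 𝕜] [Fintype ι] :
    Convex ℝ {A : Matrix ι ι 𝕜 | A.PosSemidef} :=
  fun _ hA _ hB _ _ ha hb _ => (hA.smul ha).add (hB.smul hb)

section Entropy

variable {n : ℕ} {ρ W : Matrix (Fin n) (Fin n) ℂ}

lemma vnEntropy_of_isHermitian (hρ : ρ.IsHermitian) :
    vnEntropy ρ = ∑ k, sfun (hρ.eigenvalues k) :=
  dif_pos hρ

theorem vnEntropy_eq_sum_sfun_diag_eigenvectorUnitary (hρ : ρ.IsHermitian) :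
    vnEntropy ρ = ∑ i, sfun ((star (hρ.eigenvectorUnitary : Matrix (Fin n) (Fin n) ℂ) * ρ *
      hρ.eigenvectorUnitary) i i).re := by
  rw [← Unitary.conjStarAlgAut_star_apply (S := ℂ),
    hρ.conjStarAlgAut_star_eigenvectorUnitary, vnEntropy_of_isHermitian hρ]
  simp

theorem vnEntropy_le_sum_sfun_diag_conj (hρ : ρ.PosSemidef) (hW : W ∈ unitaryGroup (Fin n) ℂ) :
    vnEntropy ρ ≤ ∑ i, sfun ((star W * ρ * W) i i).re := by
  have hU : star W * (hρ.isHermitian.eigenvectorUnitary : Matrix (Fin n) (Fin n) ℂ) ∈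
      unitaryGroup (Fin n) ℂ :=
    mul_mem (Unitary.star_mem hW) (Subtype.prop _)
  simp_rw [← RCLike.re_to_complex, hρ.isHermitian.re_star_mul_mul_apply_self W,
    vnEntropy_of_isHermitian hρ.isHermitian]
  exact strictConcaveOn_sfun.concaveOn.sum_le_sum_map_mulVec (norm_sq_mem_doublyStochastic hU)
    hρ.eigenvalues_nonneg

theorem star_mul_mul_eq_diagonal_of_vnEntropy_eq (hρ : ρ.PosSemidef)
    (hW : W ∈ unitaryGroup (Fin n) ℂ) (heq : vnEntropy ρ = ∑ i, sfun ((star W * ρ * W) i i).re) :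
    star W * ρ * W = diagonal fun i => (((star W * ρ * W) i i).re : ℂ) := by
  have hU : star W * (hρ.isHermitian.eigenvectorUnitary : Matrix (Fin n) (Fin n) ℂ) ∈
      unitaryGroup (Fin n) ℂ :=
    mul_mem (Unitary.star_mem hW) (Subtype.prop _)
  simp_rw [← RCLike.re_to_complex, hρ.isHermitian.re_star_mul_mul_apply_self W] at heq ⊢
  rw [vnEntropy_of_isHermitian hρ.isHermitian] at heq
  rw [hρ.isHermitian.star_mul_mul_eq W]
  refine mul_diagonal_mul_star_eq_diagonal hU fun i j hij => ?_
  exact congrArg _ (strictConcaveOn_sfun.eq_mulVec_of_sum_map_mulVec_eq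
    (norm_sq_mem_doublyStochastic hU) hρ.eigenvalues_nonneg heq.symm (by simpa using hij))

theorem eq_of_vnEntropy_eq_sum_sfun_diag_conj {ρ₁ ρ₂ : Matrix (Fin n) (Fin n) ℂ}
    (h₁ : ρ₁.PosSemidef) (h₂ : ρ₂.PosSemidef) (hW : W ∈ unitaryGroup (Fin n) ℂ) {d : Fin n → ℝ}
    (hd₁ : ∀ i, ((star W * ρ₁ * W) i i).re = d i) (hd₂ : ∀ i, ((star W * ρ₂ * W) i i).re = d i)
    (hS₁ : vnEntropy ρ₁ = ∑ i, sfun (d i)) (hS₂ : vnEntropy ρ₂ = ∑ i, sfun (d i)) :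
    ρ₁ = ρ₂ := by
  have hconj : star W * ρ₁ * W = star W * ρ₂ * W := by
    rw [star_mul_mul_eq_diagonal_of_vnEntropy_eq h₁ hW (by simp_rw [hS₁, hd₁]),
      star_mul_mul_eq_diagonal_of_vnEntropy_eq h₂ hW (by simp_rw [hS₂, hd₂])]
    simp_rw [hd₁, hd₂]
  exact (Unitary.mul_right_inj (star ⟨W, hW⟩)).1 ((Unitary.mul_left_inj ⟨W, hW⟩).1 hconj)

end Entropy

theorem strictConcaveOn_vnEntropy {n : ℕ} :
    StrictConcaveOn ℝ {ρ : Matrix (Fin n) (Fin n) ℂ | ρ.PosSemidef} vnEntropy := by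
  refine ⟨convex_setOf_posSemidef, fun ρ₁ (h₁ : ρ₁.PosSemidef) ρ₂ (h₂ : ρ₂.PosSemidef) hne a b ha hb
    hab => ?_⟩
  have hσ : (a • ρ₁ + b • ρ₂).PosSemidef := convex_setOf_posSemidef h₁ h₂ ha.le hb.le hab
  set W := hσ.isHermitian.eigenvectorUnitary
  set x : Fin n → ℝ := fun i => ((star (W : Matrix (Fin n) (Fin n) ℂ) * ρ₁ * W) i i).re
  set y : Fin n → ℝ := fun i => ((star (W : Matrix (Fin n) (Fin n) ℂ) * ρ₂ * W) i i).re
  have hx : ∀ i, x i ∈ Set.Ici 0 := fun i => (h₁.conjTranspose_mul_mul_same _).diag_nonneg.1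
  have hy : ∀ i, y i ∈ Set.Ici 0 := fun i => (h₂.conjTranspose_mul_mul_same _).diag_nonneg.1
  have hσ_entropy : vnEntropy (a • ρ₁ + b • ρ₂) = ∑ i, sfun (a * x i + b * y i) := by
    rw [vnEntropy_eq_sum_sfun_diag_eigenvectorUnitary hσ.isHermitian]
    simp [x, y, W, Matrix.mul_add, Matrix.add_mul]
  have hS₁ : vnEntropy ρ₁ ≤ ∑ i, sfun (x i) := vnEntropy_le_sum_sfun_diag_conj h₁ W.2
  have hS₂ : vnEntropy ρ₂ ≤ ∑ i, sfun (y i) := vnEntropy_le_sum_sfun_diag_conj h₂ W.2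
  have hmid : ∀ i ∈ univ, a * sfun (x i) + b * sfun (y i) ≤ sfun (a * x i + b * y i) :=
    fun i _ => strictConcaveOn_sfun.concaveOn.2 (hx i) (hy i) ha.le hb.le hab
  have hle : a * vnEntropy ρ₁ + b * vnEntropy ρ₂ ≤ ∑ i, (a * sfun (x i) + b * sfun (y i)) := by
    rw [sum_add_distrib, ← mul_sum, ← mul_sum]
    gcongr
  rw [smul_eq_mul, smul_eq_mul, hσ_entropy]
  refine (hle.trans (sum_le_sum hmid)).lt_of_ne fun heq => hne ?_
  have hxy : x = y := by
    by_contra hxy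
    obtain ⟨i, hi⟩ := Function.ne_iff.1 hxy
    exact heq.not_lt (hle.trans_lt (sum_lt_sum hmid
      ⟨i, mem_univ i, strictConcaveOn_sfun.2 (hx i) (hy i) hi ha hb hab⟩))
  rw [← hxy] at heq hS₂
  simp_rw [← add_mul, hab, one_mul] at heq
  obtain rfl : b = 1 - a := by linarith
  refine eq_of_vnEntropy_eq_sum_sfun_diag_conj h₁ h₂ W.2 (fun _ => rfl) (congrFun hxy.symm) ?_ ?_
  · nlinarith [mul_le_mul_of_nonneg_left hS₂ hb.le]
  · nlinarith [mul_le_mul_of_nonneg_left hS₁ ha.le]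

/-- on any convex set `D` of density matrices, an entropy maximizer is
unique: if `ρ₁, ρ₂ ∈ D` both maximize the von Neumann entropy over `D`, then
`ρ₁ = ρ₂`. -/
theorem entropy_maximizer_unique
    {n : ℕ} (D : Set (Matrix (Fin n) (Fin n) ℂ))
    (hconv : Convex ℝ D) (hdens : ∀ ρ ∈ D, IsDensityMatrix ρ)
    (ρ₁ ρ₂ : Matrix (Fin n) (Fin n) ℂ) (h₁ : ρ₁ ∈ D) (h₂ : ρ₂ ∈ D)
    (hmax₁ : ∀ ρ ∈ D, vnEntropy ρ ≤ vnEntropy ρ₁)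
    (hmax₂ : ∀ ρ ∈ D, vnEntropy ρ ≤ vnEntropy ρ₂) :
    ρ₁ = ρ₂ :=
  (strictConcaveOn_vnEntropy.subset (fun ρ hρ => (hdens ρ hρ).1) hconv).eq_of_isMaxOn
    hmax₁ hmax₂ h₁ h₂
end

section
/- Gibbs states maximize entropy subject to their own expectation-value constraints: let C_1,…,C_m be Hermitian n×n matrices, f_1,…,f_m real numbers, and set ρ* = exp(Σ_α f_α C_α) / Tr exp(Σ_α f_α C_α). Then for every n×n density matrix ρ̄ satisfying Tr(ρ̄ C_α) = Tr(ρ* C_α) for all α = 1,…,m, one has S(ρ̄) ≤ S(ρ*), with equality if and only if ρ̄ = ρ*. -/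
open scoped ComplexOrder

/-!
Write `ρ̄ = V diag(p) V*` and `ρ* = U diag(q) U*`, where `U` diagonalises `H = Σ_α f_α C_α` with
eigenvalues `μ` and `q = softmax μ = exp μ / Z`, so that `log ρ* = H - log Z`. The constraints
together with `Tr ρ̄ = Tr ρ* = 1` give `Tr(ρ̄ log ρ*) = Tr(ρ* log ρ*) = Σ q log q`. Klein's
inequality then reads `S(ρ*) - S(ρ̄) = Σ_{j,k} |(V* U)_{jk}|² q_k klFun(p_j / q_k) ≥ 0`, because
the matrix `|(V* U)_{jk}|²` is doubly stochastic; equality forces `p_j = q_k` wherever the two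
eigenbases overlap, which says `ρ̄ = ρ*`.
-/

open Matrix Real InformationTheory

lemma mul_klFun_div (p : ℝ) {q : ℝ} (hq : q ≠ 0) :
    q * klFun (p / q) = p * log p - p * log q - p + q := by
  rcases eq_or_ne p 0 with rfl | hp
  · simp [klFun_zero]
  · rw [klFun_apply, log_div hp hq]
    field_simp
    ring

lemma sum_mul_klFun_div_eq_of_mem_doublyStochastic {ι : Type*} [Fintype ι] [DecidableEq ι]
    {M : Matrix ι ι ℝ} (hM : M ∈ doublyStochastic ℝ ι) (p : ι → ℝ) {q : ι → ℝ}
    (hq : ∀ k, q k ≠ 0) :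
    ∑ j, ∑ k, M j k * (q k * klFun (p j / q k)) =
      ∑ j, p j * log (p j) - ∑ j, ∑ k, M j k * p j * log (q k) - ∑ j, p j + ∑ k, q k := by
  have hrow (x : ι → ℝ) : ∑ j, ∑ k, M j k * x j = ∑ j, x j := by
    simp [← Finset.sum_mul, sum_row_of_mem_doublyStochastic hM]
  have hcol (y : ι → ℝ) : ∑ j, ∑ k, M j k * y k = ∑ k, y k := by
    rw [Finset.sum_comm]
    simp [← Finset.sum_mul, sum_col_of_mem_doublyStochastic hM]
  calc ∑ j, ∑ k, M j k * (q k * klFun (p j / q k))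
      = ∑ j, ∑ k, (M j k * (p j * log (p j)) - M j k * p j * log (q k) - M j k * p j
          + M j k * q k) := by
        simp only [mul_klFun_div _ (hq _)]
        ring_nf
    _ = _ := by
        simp only [Finset.sum_add_distrib, Finset.sum_sub_distrib, hrow, hcol]

section Softmax

variable {ι : Type*} [Fintype ι]

noncomputable def softmax (μ : ι → ℝ) (k : ι) : ℝ := exp (μ k) / ∑ i, exp (μ i)

lemma sum_exp_pos [Nonempty ι] (μ : ι → ℝ) : 0 < ∑ i, exp (μ i) :=
  Finset.sum_pos (fun i _ => exp_pos (μ i)) Finset.univ_nonempty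

lemma softmax_pos [Nonempty ι] (μ : ι → ℝ) (k : ι) : 0 < softmax μ k :=
  div_pos (exp_pos _) (sum_exp_pos μ)

lemma sum_softmax [Nonempty ι] (μ : ι → ℝ) : ∑ k, softmax μ k = 1 := by
  simp only [softmax]
  rw [← Finset.sum_div, div_self (sum_exp_pos μ).ne']

lemma log_softmax (μ : ι → ℝ) (k : ι) :
    log (softmax μ k) = μ k - log (∑ i, exp (μ i)) := by
  have : Nonempty ι := ⟨k⟩
  rw [softmax, log_div (exp_pos _).ne' (sum_exp_pos μ).ne', log_exp]

end Softmax

namespace Matrix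

variable {ι : Type*} [Fintype ι] [DecidableEq ι]

noncomputable def conjDiagonal (U : unitaryGroup ι ℂ) (d : ι → ℝ) : Matrix ι ι ℂ :=
  Unitary.conjStarAlgAut ℂ _ U (diagonal (fun i => (d i : ℂ)))

lemma IsHermitian.eq_conjDiagonal {A : Matrix ι ι ℂ} (hA : A.IsHermitian) :
    A = conjDiagonal hA.eigenvectorUnitary hA.eigenvalues :=
  hA.spectral_theorem

lemma isHermitian_conjDiagonal (U : unitaryGroup ι ℂ) (d : ι → ℝ) :
    (conjDiagonal U d).IsHermitian :=
  IsSelfAdjoint.map (isHermitian_iff_isSelfAdjoint.mp <|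
    isHermitian_diagonal_of_self_adjoint (fun i => (d i : ℂ)) <| funext fun i => by simp) _

lemma trace_conjDiagonal (U : unitaryGroup ι ℂ) (d : ι → ℝ) :
    (conjDiagonal U d).trace = ((∑ i, d i : ℝ) : ℂ) := by
  simp [conjDiagonal, trace_mul_cycle (U : Matrix ι ι ℂ)]

lemma conjDiagonal_mul (U : unitaryGroup ι ℂ) (a b : ι → ℝ) :
    conjDiagonal U a * conjDiagonal U b = conjDiagonal U (a * b) := by
  rw [conjDiagonal, conjDiagonal, ← map_mul, diagonal_mul_diagonal]
  simp [conjDiagonal]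

lemma conjDiagonal_smul (U : unitaryGroup ι ℂ) (c : ℝ) (d : ι → ℝ) :
    (c : ℂ) • conjDiagonal U d = conjDiagonal U (c • d) := by
  rw [conjDiagonal, conjDiagonal, ← map_smul, ← diagonal_smul]
  congr 2
  ext i
  simp

lemma conjDiagonal_sub_const (U : unitaryGroup ι ℂ) (d : ι → ℝ) (c : ℝ) :
    conjDiagonal U (fun i => d i - c) = conjDiagonal U d - (c : ℂ) • 1 := by
  rw [conjDiagonal, conjDiagonal, ← map_one (Unitary.conjStarAlgAut ℂ _ U), ← map_smul,
    ← map_sub]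
  congr 1
  ext i j
  by_cases h : i = j <;> simp [h]

lemma exp_conjDiagonal (U : unitaryGroup ι ℂ) (d : ι → ℝ) :
    NormedSpace.exp (conjDiagonal U d) = conjDiagonal U (Real.exp ∘ d) := by
  have hU : IsUnit (U : Matrix ι ι ℂ) := ⟨Unitary.toUnits U, rfl⟩
  have hinv : (U : Matrix ι ι ℂ)⁻¹ = star (U : Matrix ι ι ℂ) :=
    inv_eq_left_inv (Unitary.coe_star_mul_self U)
  simp only [conjDiagonal, Unitary.conjStarAlgAut_apply, ← hinv, exp_conj _ _ hU, exp_diagonal]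
  congr 3
  ext i
  simp [Pi.coe_exp, ← Complex.exp_eq_exp_ℂ]

open Polynomial in
lemma IsHermitian.sum_comp_eigenvalues_of_eq_conjDiagonal {A : Matrix ι ι ℂ}
    (hA : A.IsHermitian) {U : unitaryGroup ι ℂ} {d : ι → ℝ} (h : A = conjDiagonal U d)
    (g : ℝ → ℝ) : ∑ i, g (hA.eigenvalues i) = ∑ i, g (d i) := by
  have hcharpoly : A.charpoly = ∏ i, (X - C (d i : ℂ)) := by
    rw [h, conjDiagonal, Unitary.conjStarAlgAut_apply, charpoly_mul_comm, ← mul_assoc,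
      Unitary.coe_star_mul_self, one_mul, charpoly_diagonal]
  have hroots : Finset.univ.val.map ((RCLike.ofReal : ℝ → ℂ) ∘ hA.eigenvalues) =
      Finset.univ.val.map (RCLike.ofReal ∘ d) := by
    rw [← hA.roots_charpoly_eq_eigenvalues, hcharpoly,
      roots_prod _ _ (by simp [Finset.prod_ne_zero_iff, X_sub_C_ne_zero])]
    simp
  simpa [Multiset.map_map, Function.comp_def] using
    congrArg (fun s => (s.map (g ∘ RCLike.re)).sum) hroots

lemma inv_trace_exp_smul_exp_conjDiagonal (U : unitaryGroup ι ℂ) (μ : ι → ℝ) :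
    (NormedSpace.exp (conjDiagonal U μ)).trace⁻¹ • NormedSpace.exp (conjDiagonal U μ) =
      conjDiagonal U (softmax μ) := by
  rw [exp_conjDiagonal, trace_conjDiagonal, ← Complex.ofReal_inv, conjDiagonal_smul]
  congr 1
  ext k
  simp [softmax, div_eq_inv_mul]

lemma IsHermitian.inv_trace_exp_smul_exp {A : Matrix ι ι ℂ} (hA : A.IsHermitian) :
    (NormedSpace.exp A).trace⁻¹ • NormedSpace.exp A =
      conjDiagonal hA.eigenvectorUnitary (softmax hA.eigenvalues) := by
  conv_lhs => rw [hA.eq_conjDiagonal]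
  exact inv_trace_exp_smul_exp_conjDiagonal _ _

lemma trace_mul_conjDiagonal_log_softmax (ρ : Matrix ι ι ℂ) (U : unitaryGroup ι ℂ)
    (μ : ι → ℝ) :
    (ρ * conjDiagonal U (log ∘ softmax μ)).trace =
      (ρ * conjDiagonal U μ).trace - log (∑ i, exp (μ i)) * ρ.trace := by
  have hlog : log ∘ softmax μ = fun k => μ k - log (∑ i, exp (μ i)) := funext (log_softmax μ)
  rw [hlog, conjDiagonal_sub_const, mul_sub, trace_sub, Matrix.mul_smul, mul_one, trace_smul,
    smul_eq_mul]

lemma map_normSq_mem_doublyStochastic (W : unitaryGroup ι ℂ) :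
    (W : Matrix ι ι ℂ).map Complex.normSq ∈ doublyStochastic ℝ ι := by
  refine mem_doublyStochastic_iff_sum.mpr
    ⟨fun _ _ => Complex.normSq_nonneg _, fun j => ?_, fun k => ?_⟩
  · have h := congrFun₂ (Unitary.coe_mul_star_self W) j j
    simp only [mul_apply, Unitary.coe_star, star_apply, Complex.star_def, Complex.mul_conj,
      one_apply_eq] at h
    exact_mod_cast h
  · have h := congrFun₂ (Unitary.coe_star_mul_self W) k k
    simp only [mul_apply, star_apply, Complex.star_def, ← Complex.normSq_eq_conj_mul_self,
      one_apply_eq] at h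
    exact_mod_cast h

noncomputable def overlap (V U : unitaryGroup ι ℂ) : Matrix ι ι ℝ :=
  (star (V : Matrix ι ι ℂ) * U).map Complex.normSq

lemma overlap_mem_doublyStochastic (V U : unitaryGroup ι ℂ) :
    overlap V U ∈ doublyStochastic ℝ ι :=
  map_normSq_mem_doublyStochastic (star V * U)

lemma trace_diagonal_mul_mul_diagonal_mul_star (W : Matrix ι ι ℂ) (a b : ι → ℝ) :
    (diagonal (fun i => (a i : ℂ)) * W * diagonal (fun i => (b i : ℂ)) * star W).trace =
      ((∑ j, ∑ k, Complex.normSq (W j k) * a j * b k : ℝ) : ℂ) := by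
  push_cast
  refine Finset.sum_congr rfl fun j _ => Finset.sum_congr rfl fun k _ => ?_
  simp only [diagonal_mul, mul_diagonal, star_apply, Complex.star_def,
    Complex.normSq_eq_conj_mul_self]
  ring

lemma trace_conjDiagonal_mul_conjDiagonal (V U : unitaryGroup ι ℂ) (a b : ι → ℝ) :
    (conjDiagonal V a * conjDiagonal U b).trace =
      ((∑ j, ∑ k, overlap V U j k * a j * b k : ℝ) : ℂ) := by
  convert trace_diagonal_mul_mul_diagonal_mul_star
    (star (V : Matrix ι ι ℂ) * (U : Matrix ι ι ℂ)) a b using 1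
  · simp only [conjDiagonal, Unitary.conjStarAlgAut_apply, star_mul, star_star, mul_assoc]
    rw [trace_mul_comm]
    simp only [mul_assoc]
  · rfl

lemma conjDiagonal_eq_of_forall_overlap {V U : unitaryGroup ι ℂ} {p q : ι → ℝ}
    (h : ∀ j k, overlap V U j k = 0 ∨ p j = q k) : conjDiagonal V p = conjDiagonal U q := by
  set W : Matrix ι ι ℂ := star (V : Matrix ι ι ℂ) * U
  have hcomm : diagonal (fun j => (p j : ℂ)) * W = W * diagonal (fun k => (q k : ℂ)) := by
    ext j k
    rw [diagonal_mul, mul_diagonal]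
    rcases h j k with h | h
    · have hW : W j k = 0 := Complex.normSq_eq_zero.mp h
      rw [hW, mul_zero, zero_mul]
    · rw [h, mul_comm]
  have hVW : (U : Matrix ι ι ℂ) = V * W := by
    rw [← mul_assoc, Unitary.mul_star_self_of_mem V.2, one_mul]
  have hW : W * star W = 1 := by
    rw [star_mul, star_star, mul_assoc, ← mul_assoc (U : Matrix ι ι ℂ),
      Unitary.mul_star_self_of_mem U.2, one_mul, Unitary.star_mul_self_of_mem V.2]
  calc conjDiagonal V p
      = V * (diagonal (fun j => (p j : ℂ)) * W * star W) * star (V : Matrix ι ι ℂ) := by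
        rw [mul_assoc _ W, hW, mul_one]; rfl
    _ = conjDiagonal U q := by
        rw [hcomm, conjDiagonal, Unitary.conjStarAlgAut_apply, hVW]
        simp only [star_mul, mul_assoc]

lemma sum_mul_log_sub_re_trace_eq (V U : unitaryGroup ι ℂ) (p : ι → ℝ) {q : ι → ℝ}
    (hq : ∀ k, q k ≠ 0) :
    ∑ j, p j * log (p j) - (conjDiagonal V p * conjDiagonal U (log ∘ q)).trace.re =
      ∑ j, p j - ∑ k, q k + ∑ j, ∑ k, overlap V U j k * (q k * klFun (p j / q k)) := by
  rw [sum_mul_klFun_div_eq_of_mem_doublyStochastic (overlap_mem_doublyStochastic V U) p hq,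
    trace_conjDiagonal_mul_conjDiagonal, Complex.ofReal_re]
  simp only [Function.comp_apply, mul_assoc]
  ring

section Klein

variable {V U : unitaryGroup ι ℂ} {p q : ι → ℝ}

lemma overlap_mul_klFun_nonneg (hp : ∀ j, 0 ≤ p j) (hq : ∀ k, 0 < q k) (j k : ι) :
    0 ≤ overlap V U j k * (q k * klFun (p j / q k)) :=
  mul_nonneg (Complex.normSq_nonneg _)
    (mul_nonneg (hq k).le (klFun_nonneg (div_nonneg (hp j) (hq k).le)))

theorem klein_inequality (hp : ∀ j, 0 ≤ p j) (hq : ∀ k, 0 < q k) :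
    ∑ j, p j - ∑ k, q k ≤
      ∑ j, p j * log (p j) - (conjDiagonal V p * conjDiagonal U (log ∘ q)).trace.re := by
  rw [sum_mul_log_sub_re_trace_eq V U p fun k => (hq k).ne']
  exact le_add_of_nonneg_right <| Finset.sum_nonneg fun j _ => Finset.sum_nonneg fun k _ =>
    overlap_mul_klFun_nonneg hp hq j k

theorem conjDiagonal_eq_of_klein_eq (hp : ∀ j, 0 ≤ p j) (hq : ∀ k, 0 < q k)
    (h : ∑ j, p j - ∑ k, q k =
      ∑ j, p j * log (p j) - (conjDiagonal V p * conjDiagonal U (log ∘ q)).trace.re) :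
    conjDiagonal V p = conjDiagonal U q := by
  rw [sum_mul_log_sub_re_trace_eq V U p fun k => (hq k).ne', left_eq_add,
    Finset.sum_eq_zero_iff_of_nonneg fun j _ => Finset.sum_nonneg fun k _ =>
      overlap_mul_klFun_nonneg hp hq j k] at h
  refine conjDiagonal_eq_of_forall_overlap fun j k => ?_
  have hjk := (Finset.sum_eq_zero_iff_of_nonneg fun k _ => overlap_mul_klFun_nonneg hp hq j k).mp
    (h j (Finset.mem_univ j)) k (Finset.mem_univ k)
  simpa [(hq k).ne', klFun_eq_zero_iff (div_nonneg (hp j) (hq k).le),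
    div_eq_one_iff_eq (hq k).ne'] using hjk

end Klein

end Matrix

lemma sfun_eq_neg_mul_log {x : ℝ} (hx : 0 ≤ x) : sfun x = -(x * log x) := by
  rcases hx.eq_or_lt with rfl | hx
  · simp [sfun]
  · simp [sfun, hx, neg_mul]

lemma vnEntropy_conjDiagonal {n : ℕ} (U : unitaryGroup (Fin n) ℂ) {d : Fin n → ℝ}
    (hd : ∀ k, 0 ≤ d k) : vnEntropy (conjDiagonal U d) = -∑ k, d k * log (d k) := by
  rw [vnEntropy, dif_pos (isHermitian_conjDiagonal U d),
    IsHermitian.sum_comp_eigenvalues_of_eq_conjDiagonal _ rfl, ← Finset.sum_neg_distrib]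
  exact Finset.sum_congr rfl fun k _ => sfun_eq_neg_mul_log (hd k)

theorem vnEntropy_le_of_trace_mul_log_eq {n : ℕ} {V U : unitaryGroup (Fin n) ℂ}
    {p q : Fin n → ℝ} (hp : ∀ j, 0 ≤ p j) (hq : ∀ k, 0 < q k) (hsum : ∑ j, p j = ∑ k, q k)
    (htrace : (conjDiagonal V p * conjDiagonal U (log ∘ q)).trace =
      (conjDiagonal U q * conjDiagonal U (log ∘ q)).trace) :
    vnEntropy (conjDiagonal V p) ≤ vnEntropy (conjDiagonal U q) ∧
      (vnEntropy (conjDiagonal V p) = vnEntropy (conjDiagonal U q) →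
        conjDiagonal V p = conjDiagonal U q) := by
  have hcross :
      (conjDiagonal V p * conjDiagonal U (log ∘ q)).trace.re = ∑ k, q k * log (q k) := by
    rw [htrace, conjDiagonal_mul, trace_conjDiagonal, Complex.ofReal_re]
    rfl
  rw [vnEntropy_conjDiagonal V hp, vnEntropy_conjDiagonal U fun k => (hq k).le,
    neg_le_neg_iff, neg_inj]
  have hklein := klein_inequality (V := V) (U := U) hp hq
  exact ⟨by linarith, fun heq => conjDiagonal_eq_of_klein_eq hp hq (by linarith)⟩

open NormedSpace in
/-- Gibbs states maximize entropy subject to their own expectation-value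
constraints.  For Hermitian `C₁, …, C_m` and reals `f₁, …, f_m`, let
`ρ* = exp(Σ_α f_α C_α) / Tr exp(Σ_α f_α C_α)`.  Then every density matrix `ρ̄` with
`Tr(ρ̄ C_α) = Tr(ρ* C_α)` for all `α` satisfies `S(ρ̄) ≤ S(ρ*)`, with equality iff
`ρ̄ = ρ*`. -/
theorem gibbs_maximizes_entropy
    {n m : ℕ} (C : Fin m → Matrix (Fin n) (Fin n) ℂ)
    (hC : ∀ α, (C α).IsHermitian) (f : Fin m → ℝ)
    (ρstar : Matrix (Fin n) (Fin n) ℂ)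
    (hρstar : ρstar = ((exp (∑ α, ((f α : ℂ) • C α))).trace)⁻¹ •
        exp (∑ α, ((f α : ℂ) • C α)))
    (ρbar : Matrix (Fin n) (Fin n) ℂ) (hρbar : IsDensityMatrix ρbar)
    (hconstraints : ∀ α, (ρbar * C α).trace = (ρstar * C α).trace) :
    vnEntropy ρbar ≤ vnEntropy ρstar ∧
      (vnEntropy ρbar = vnEntropy ρstar ↔ ρbar = ρstar) := by
  set H := ∑ α, (f α : ℂ) • C α
  have hH : H.IsHermitian :=
    isSelfAdjoint_sum _ fun α _ => IsSelfAdjoint.smul (Complex.conj_ofReal (f α)) (hC α)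
  have hconstraintH : (ρbar * H).trace = (ρstar * H).trace := by
    simp only [H, Finset.mul_sum, Matrix.mul_smul, trace_sum, trace_smul, hconstraints]
  have : Nonempty (Fin n) := by
    by_contra hempty
    have := not_nonempty_iff.mp hempty
    simpa [trace_eq_zero_of_isEmpty] using hρbar.2
  set U := hH.eigenvectorUnitary
  set μ := hH.eigenvalues
  have htrace_log (ρ : Matrix (Fin n) (Fin n) ℂ) : (ρ * conjDiagonal U (log ∘ softmax μ)).trace =
      (ρ * H).trace - log (∑ i, Real.exp (μ i)) * ρ.trace := by
    rw [trace_mul_conjDiagonal_log_softmax, ← hH.eq_conjDiagonal]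
  obtain rfl : ρstar = conjDiagonal U (softmax μ) := hρstar.trans hH.inv_trace_exp_smul_exp
  obtain ⟨V, p, hp, rfl⟩ : ∃ V p, (∀ j, 0 ≤ p j) ∧ ρbar = conjDiagonal V p :=
    ⟨_, _, hρbar.1.eigenvalues_nonneg, hρbar.1.1.eq_conjDiagonal⟩
  have hsum : ∑ j, p j = ∑ k, softmax μ k := by
    rw [sum_softmax]
    exact_mod_cast (trace_conjDiagonal V p).symm.trans hρbar.2
  obtain ⟨hle, heq⟩ := vnEntropy_le_of_trace_mul_log_eq hp (softmax_pos μ) hsum (by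
    rw [htrace_log, htrace_log, hconstraintH, hρbar.2, trace_conjDiagonal, sum_softmax,
      Complex.ofReal_one])
  exact ⟨hle, heq, congrArg vnEntropy⟩
end
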